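/- Let m be a positive integer. There exist positive constants C and C_m such that for every real x > 5, | Σ_{dℓ ≤ x} ((μ*ψ)(d)/d)·ℓ^{−2m} − [ (ζ(1+2m)/ζ(4)) x + Σ_{d ≤ x} ((|μ|*μ)(d)/d) Δ_{−2m}(x/d) − ζ(2m)/(2ζ(2)) ] | ≤ C_m · δ(x), where the first sum runs over pairs of positive integers (d, ℓ) with dℓ ≤ x and δ(x) = exp(−C (log x)^{3/5}/(log log x)^{1/5}). -/

import Mathlib

open Finset

/-- `Δ_{-2m}(x)`, the error term in the generalized divisor problem for `σ_{-2m}`. -/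
noncomputable def genDivisorError (m : ℕ) (x : ℝ) : ℂ :=
  (∑ n ∈ Finset.Icc 1 ⌊x⌋₊, ∑ d ∈ n.divisors, ((d : ℂ) ^ (2 * m))⁻¹ : ℂ)
    - riemannZeta (1 + 2 * m) * x + riemannZeta (2 * m) / 2

/-- `δ(x) = exp(-C (log x)^{3/5} / (log log x)^{1/5})`. -/
noncomputable def deltaFn (C x : ℝ) : ℝ :=
  Real.exp (-C * (Real.log x) ^ ((3 : ℝ) / 5) / (Real.log (Real.log x)) ^ ((1 : ℝ) / 5))

/-- The Dedekind function `ψ = id * |μ|`. -/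
def dedekindPsi (n : ℕ) : ℤ :=
  ∑ d ∈ n.divisors, (d : ℤ) * |ArithmeticFunction.moebius (n / d)|

/-- The Dirichlet convolution `μ * ψ` evaluated at `n`. -/
def moebiusConvPsi (n : ℕ) : ℤ :=
  ∑ d ∈ n.divisors, ArithmeticFunction.moebius d * dedekindPsi (n / d)

/-- The Dirichlet convolution `|μ| * μ` evaluated at `n`. -/
def absMoebiusConvMoebius (n : ℕ) : ℤ :=
  ∑ d ∈ n.divisors, |ArithmeticFunction.moebius d| * ArithmeticFunction.moebius (n / d)


/-!
Since `μ * ψ = (|μ| * μ) * id`, we have `(μ * ψ)(d) / d = ∑_{e ∣ d} (|μ| * μ)(e) / e`, and the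
hyperbola identity regroups the double sum as `∑_{e ≤ x} (|μ| * μ)(e) / e · ∑_{n ≤ x/e} σ_{-2m}(n)`.
Inserting the definition of `Δ_{-2m}(x/e)` leaves `ζ(1+2m) x ∑_{e ≤ x} (|μ| * μ)(e) / e²` and
`-ζ(2m)/2 ∑_{e ≤ x} (|μ| * μ)(e) / e`. The function `|μ| * μ` vanishes off the squares and takes
the value `μ(k)` at `k²` (compare both sides on prime powers), so these are partial sums up to `√x`
of `∑ μ(k)/k⁴ = 1/ζ(4)` and `∑ μ(k)/k² = 1/ζ(2)`, whose tails are `O(x^{-3/2})` and `O(x^{-1/2})`.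
The total error is therefore `O(x^{-1/2})`, which is at most `δ(x)` once `C` is small.
-/

open ArithmeticFunction
open scoped ArithmeticFunction.Moebius ArithmeticFunction.zeta

theorem Nat.Prime.isSquare_pow_iff {p k : ℕ} (hp : p.Prime) : IsSquare (p ^ k) ↔ Even k := by
  refine ⟨fun ⟨c, hc⟩ => ?_, fun hk => hk.isSquare_pow p⟩
  obtain ⟨j, -, rfl⟩ := (Nat.dvd_prime_pow hp).mp (Dvd.intro c hc.symm)
  rw [← pow_add] at hc
  exact ⟨j, Nat.pow_right_injective hp.two_le hc⟩

theorem Nat.Coprime.isSquare_mul_iff {m n : ℕ} (h : m.Coprime n) :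
    IsSquare (m * n) ↔ IsSquare m ∧ IsSquare n := by
  refine ⟨fun ⟨c, hc⟩ => ?_, fun ⟨hm, hn⟩ => hm.mul hn⟩
  have hsq : ∀ {a b : ℕ}, a.Coprime b → a * b = c ^ 2 → IsSquare a := fun hab habc => by
    obtain ⟨d, hd⟩ := exists_eq_pow_of_mul_eq_pow (Nat.isUnit_iff.mpr hab) habc
    exact ⟨d, by rw [hd, sq]⟩
  rw [← sq] at hc
  exact ⟨hsq h hc, hsq h.symm (by rw [mul_comm, hc])⟩

namespace ArithmeticFunction

theorem mul_apply_prime_pow {R : Type*} [Semiring R] (f g : ArithmeticFunction R) {p : ℕ}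
    (hp : p.Prime) (i : ℕ) :
    (f * g) (p ^ i) = ∑ j ∈ range (i + 1), f (p ^ j) * g (p ^ (i - j)) := by
  rw [mul_apply, Nat.sum_divisorsAntidiagonal (fun a b => f a * g b),
    Nat.sum_divisors_prime_pow hp]
  refine sum_congr rfl fun j hj => ?_
  rw [Nat.pow_div (Nat.lt_succ_iff.mp (mem_range.mp hj)) hp.pos]

theorem moebius_apply_prime_pow_eq_zero {p k : ℕ} (hp : p.Prime) (hk : 2 ≤ k) :
    μ (p ^ k) = 0 := by
  rw [moebius_apply_prime_pow hp (by omega), if_neg (by omega)]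

def absMoebius : ArithmeticFunction ℤ := ⟨fun n => |μ n|, by simp⟩

@[simp]
theorem absMoebius_apply (n : ℕ) : absMoebius n = |μ n| := rfl

theorem isMultiplicative_absMoebius : absMoebius.IsMultiplicative :=
  ⟨by simp, fun h => by simp [isMultiplicative_moebius.map_mul_of_coprime h, abs_mul]⟩

def moebiusSqrt : ArithmeticFunction ℤ := ⟨fun n => if IsSquare n then μ n.sqrt else 0, by simp⟩

@[simp]
theorem moebiusSqrt_apply_sq (k : ℕ) : moebiusSqrt (k ^ 2) = μ k := by
  simp [moebiusSqrt, IsSquare.sq, Nat.sqrt_eq']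

theorem moebiusSqrt_apply_of_not_isSquare {n : ℕ} (h : ¬IsSquare n) : moebiusSqrt n = 0 := by
  simp [moebiusSqrt, h]

theorem isMultiplicative_moebiusSqrt : moebiusSqrt.IsMultiplicative := by
  refine ⟨by simpa using moebiusSqrt_apply_sq 1, fun {m n} h => ?_⟩
  by_cases hsq : IsSquare m ∧ IsSquare n
  · obtain ⟨⟨a, rfl⟩, ⟨b, rfl⟩⟩ := hsq
    have hab : a.Coprime b := by
      simpa [← sq, Nat.coprime_pow_left_iff, Nat.coprime_pow_right_iff] using h
    rw [← sq, ← sq, ← mul_pow, moebiusSqrt_apply_sq, moebiusSqrt_apply_sq, moebiusSqrt_apply_sq,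
      isMultiplicative_moebius.map_mul_of_coprime hab]
  · rw [moebiusSqrt_apply_of_not_isSquare (h.isSquare_mul_iff.not.mpr hsq)]
    rcases not_and_or.mp hsq with hm | hn
    · rw [moebiusSqrt_apply_of_not_isSquare hm, zero_mul]
    · rw [moebiusSqrt_apply_of_not_isSquare hn, mul_zero]

theorem absMoebius_mul_moebius : absMoebius * μ = moebiusSqrt := by
  refine (IsMultiplicative.eq_iff_eq_on_prime_powers _
    (isMultiplicative_absMoebius.mul isMultiplicative_moebius) _ isMultiplicative_moebiusSqrt).mpr
    fun p i hp => ?_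
  rw [mul_apply_prime_pow _ _ hp]
  match i with
  | 0 => simpa using (moebiusSqrt_apply_sq 1).symm
  | 1 => simp [moebius_apply_prime hp, sum_range_succ,
      moebiusSqrt_apply_of_not_isSquare (by simpa using hp.prime.not_isSquare)]
  | 2 => simp [moebius_apply_prime hp, sum_range_succ, moebius_apply_prime_pow_eq_zero hp]
  | k + 3 =>
    have hvanish : ∀ j ∈ range (k + 4), absMoebius (p ^ j) * μ (p ^ (k + 3 - j)) = 0 :=
      fun j hj => by
        rcases le_or_gt j 1 with hj1 | hj1
        · rw [moebius_apply_prime_pow_eq_zero (k := k + 3 - j) hp (by omega), mul_zero]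
        · rw [absMoebius_apply, moebius_apply_prime_pow_eq_zero hp hj1, abs_zero, zero_mul]
    rw [sum_eq_zero hvanish]
    rcases Nat.even_or_odd' (k + 3) with ⟨t, ht | ht⟩
    · rw [ht, pow_mul', moebiusSqrt_apply_sq, moebius_apply_prime_pow_eq_zero hp (by omega)]
    · rw [moebiusSqrt_apply_of_not_isSquare
        (by rw [hp.isSquare_pow_iff, Nat.not_even_iff_odd]; exact ⟨t, ht⟩)]

theorem sum_Icc_moebiusSqrt_mul {R : Type*} [CommRing R] (N : ℕ) (w : ℕ → R) :
    ∑ d ∈ Icc 1 N, (moebiusSqrt d : R) * w d = ∑ k ∈ Icc 1 N.sqrt, (μ k : R) * w (k ^ 2) := by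
  have hinj : Set.InjOn (· ^ 2 : ℕ → ℕ) (Icc 1 N.sqrt) :=
    fun a _ b _ h => Nat.pow_left_injective two_ne_zero h
  have hmem : ∀ {k}, k ∈ Icc 1 N.sqrt ↔ k ^ 2 ∈ Icc 1 N := by
    simp [Nat.le_sqrt', Nat.one_le_iff_ne_zero]
  simp_rw [← moebiusSqrt_apply_sq]
  rw [← sum_image (f := fun d => (moebiusSqrt d : R) * w d) hinj]
  refine (sum_subset (fun d hd => ?_) fun d hd hd' => ?_).symm
  · obtain ⟨k, hk, rfl⟩ := mem_image.mp hd
    exact hmem.mp hk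
  · by_cases hsq : IsSquare d
    · obtain ⟨k, rfl⟩ := hsq
      exact (hd' (mem_image.mpr ⟨k, hmem.mpr (by rwa [sq]), sq k⟩)).elim
    · simp [moebiusSqrt_apply_of_not_isSquare hsq]

end ArithmeticFunction

theorem dedekindPsi_eq_id_mul_absMoebius (n : ℕ) :
    dedekindPsi n = ((ArithmeticFunction.id : ArithmeticFunction ℤ) * absMoebius) n := by
  rw [mul_apply, Nat.sum_divisorsAntidiagonal
    (fun a b => (ArithmeticFunction.id : ArithmeticFunction ℤ) a * absMoebius b)]
  rfl

theorem absMoebiusConvMoebius_eq_moebiusSqrt (n : ℕ) : absMoebiusConvMoebius n = moebiusSqrt n := by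
  rw [← absMoebius_mul_moebius, mul_apply,
    Nat.sum_divisorsAntidiagonal (fun a b => absMoebius a * μ b)]
  rfl

theorem moebiusConvPsi_eq_moebiusSqrt_mul_id (n : ℕ) :
    moebiusConvPsi n = (moebiusSqrt * (ArithmeticFunction.id : ArithmeticFunction ℤ)) n := by
  have hconv : moebiusConvPsi n
      = ((μ : ArithmeticFunction ℤ) * (↑ArithmeticFunction.id * absMoebius)) n := by
    rw [mul_apply, Nat.sum_divisorsAntidiagonal
      (fun a b => μ a * (↑ArithmeticFunction.id * absMoebius) b)]
    exact sum_congr rfl fun d _ => by rw [dedekindPsi_eq_id_mul_absMoebius]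
  rw [hconv, ← absMoebius_mul_moebius]
  ring_nf

theorem mul_id_apply_div_eq_sum {K : Type*} [Field K] [CharZero K] (f : ArithmeticFunction ℤ) {n : ℕ}
    (hn : n ≠ 0) :
    ((f * (ArithmeticFunction.id : ArithmeticFunction ℤ)) n : K) / n
      = ∑ d ∈ n.divisors, (f d : K) / d := by
  rw [mul_apply, Nat.sum_divisorsAntidiagonal
    (fun a b => f a * (ArithmeticFunction.id : ArithmeticFunction ℤ) b), Int.cast_sum, sum_div]
  refine sum_congr rfl fun d hd => ?_
  obtain ⟨hdn, -⟩ := Nat.mem_divisors.mp hd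
  have hd0 : (d : K) ≠ 0 := Nat.cast_ne_zero.mpr (Nat.pos_of_mem_divisors hd).ne'
  simp only [natCoe_apply, id_apply, Int.cast_mul, Int.cast_natCast, Nat.cast_div hdn hd0]
  field_simp

theorem moebiusConvPsi_div_eq_sum {n : ℕ} (hn : n ≠ 0) :
    (moebiusConvPsi n : ℂ) / n = ∑ d ∈ n.divisors, (absMoebiusConvMoebius d : ℂ) / d := by
  simp only [moebiusConvPsi_eq_moebiusSqrt_mul_id, absMoebiusConvMoebius_eq_moebiusSqrt,
    mul_id_apply_div_eq_sum _ hn]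

theorem sum_range_inv_pow_nat_add_le {s K : ℕ} (hs : 2 ≤ s) (hK : K ≠ 0) (M : ℕ) :
    ∑ i ∈ range M, (((i + (K + 1) : ℕ) : ℝ) ^ s)⁻¹ ≤ ((K : ℝ) ^ (s - 1))⁻¹ := by
  have hK0 : (0 : ℝ) < K := by positivity
  have hterm : ∀ n : ℕ, K ≤ n → ((n : ℝ) ^ s)⁻¹ ≤ ((K : ℝ) ^ (s - 2))⁻¹ * ((n : ℝ) ^ 2)⁻¹ := by
    intro n hn
    have hKn : (K : ℝ) ≤ n := by exact_mod_cast hn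
    rw [← mul_inv, ← pow_sub_mul_pow (n : ℝ) hs]
    exact inv_anti₀ (mul_pos (pow_pos hK0 _) (pow_pos (hK0.trans_le hKn) _)) (by gcongr)
  have hreindex : ∑ i ∈ range M, (((i + (K + 1) : ℕ) : ℝ) ^ 2)⁻¹
      = ∑ n ∈ Ioc K (K + M), ((n : ℝ) ^ 2)⁻¹ := by
    rw [range_eq_Ico, sum_Ico_add' (fun n : ℕ => ((n : ℝ) ^ 2)⁻¹)]
    congr 1
    ext n
    simp only [mem_Ico, mem_Ioc]
    omega
  calc ∑ i ∈ range M, (((i + (K + 1) : ℕ) : ℝ) ^ s)⁻¹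
      ≤ ∑ i ∈ range M, ((K : ℝ) ^ (s - 2))⁻¹ * (((i + (K + 1) : ℕ) : ℝ) ^ 2)⁻¹ :=
        sum_le_sum fun i _ => hterm _ (by omega)
    _ = ((K : ℝ) ^ (s - 2))⁻¹ * ∑ n ∈ Ioc K (K + M), ((n : ℝ) ^ 2)⁻¹ := by
        rw [← mul_sum, hreindex]
    _ ≤ ((K : ℝ) ^ (s - 2))⁻¹ * (K : ℝ)⁻¹ := by
        gcongr
        exact (sum_Ioc_inv_sq_le_sub hK (by omega)).trans (sub_le_self _ (by positivity))
    _ = ((K : ℝ) ^ (s - 1))⁻¹ := by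
        rw [← mul_inv, ← pow_succ]
        congr 3
        omega

theorem norm_sum_Icc_sub_LSeries_le {f : ℕ → ℂ} (hf : ∀ n, ‖f n‖ ≤ 1) {s : ℕ} (hs : 2 ≤ s)
    {K : ℕ} (hK : K ≠ 0) :
    ‖∑ n ∈ Icc 1 K, f n / (n : ℂ) ^ s - LSeries f s‖ ≤ ((K : ℝ) ^ (s - 1))⁻¹ := by
  have hsum : LSeriesSummable f s :=
    LSeriesSummable_of_bounded_of_one_lt_re (fun n _ => hf n) (by simp; omega)
  have hpartial : ∑ n ∈ Icc 1 K, f n / (n : ℂ) ^ s = ∑ n ∈ range (K + 1), LSeries.term f s n := by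
    rw [range_eq_Ico, sum_eq_sum_Ico_succ_bot (by omega), LSeries.term_zero, zero_add,
      Ico_add_one_right_eq_Icc]
    refine sum_congr rfl fun n hn => ?_
    rw [LSeries.term_of_ne_zero (by simp at hn; omega), Complex.cpow_natCast]
  have hterm : ∀ n ≠ 0, ‖LSeries.term f s n‖ ≤ ((n : ℝ) ^ s)⁻¹ := fun n hn => by
    rw [LSeries.norm_term_eq, if_neg hn, Complex.natCast_re, Real.rpow_natCast, ← one_div]
    exact div_le_div_of_nonneg_right (hf _) (by positivity)
  have htail : ∀ M, ∑ i ∈ range M, ‖LSeries.term f s (i + (K + 1))‖ ≤ ((K : ℝ) ^ (s - 1))⁻¹ :=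
    fun M => (sum_le_sum fun i _ => hterm _ (by omega)).trans
      (sum_range_inv_pow_nat_add_le hs hK M)
  rw [hpartial, LSeries, ← hsum.sum_add_tsum_nat_add (K + 1), sub_add_cancel_left, norm_neg]
  exact (norm_tsum_le_tsum_norm (summable_of_sum_range_le (fun _ => norm_nonneg _) htail)).trans
    (Real.tsum_le_of_sum_range_le (fun _ => norm_nonneg _) htail)

theorem norm_sum_moebius_div_pow_sub_inv_riemannZeta_le {s : ℕ} (hs : 2 ≤ s) {K : ℕ}
    (hK : K ≠ 0) :
    ‖∑ k ∈ Icc 1 K, (μ k : ℂ) / (k : ℂ) ^ s - (riemannZeta s)⁻¹‖ ≤ ((K : ℝ) ^ (s - 1))⁻¹ := by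
  have hre : 1 < (s : ℂ).re := by simp; omega
  have hL : LSeries (fun n => (μ n : ℂ)) s = (riemannZeta s)⁻¹ := by
    rw [← LSeries_zeta_eq_riemannZeta hre]
    exact eq_inv_of_mul_eq_one_right (LSeries_zeta_mul_Lseries_moebius hre)
  rw [← hL]
  exact norm_sum_Icc_sub_LSeries_le
    (fun n => by rw [Complex.norm_intCast]; exact_mod_cast abs_moebius_le_one) hs hK

theorem sum_Icc_sum_divisors_mul_sum_Icc_div {R : Type*} [CommSemiring R] (b g : ℕ → R)
    (N : ℕ) :
    ∑ d ∈ Icc 1 N, (∑ e ∈ d.divisors, b e) * ∑ ℓ ∈ Icc 1 (N / d), g ℓ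
      = ∑ d ∈ Icc 1 N, b d * ∑ n ∈ Icc 1 (N / d), ∑ e ∈ n.divisors, g e := by
  set B := toArithmeticFunction b
  set G := toArithmeticFunction g
  have hIcc : ∀ M, Icc 1 M = Ioc 0 M := fun M => rfl
  have hB : ∀ {n}, n ≠ 0 → B n = b n := fun hn => if_neg hn
  have hG : ∀ {n}, n ≠ 0 → G n = g n := fun hn => if_neg hn
  calc ∑ d ∈ Icc 1 N, (∑ e ∈ d.divisors, b e) * ∑ ℓ ∈ Icc 1 (N / d), g ℓ
      = ∑ d ∈ Ioc 0 N, (B * ζ) d * ∑ ℓ ∈ Ioc 0 (N / d), G ℓ := by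
        refine sum_congr (hIcc N) fun d _ => ?_
        rw [coe_mul_zeta_apply, hIcc]
        congr 1
        · exact sum_congr rfl fun e he => (hB (Nat.pos_of_mem_divisors he).ne').symm
        · exact sum_congr rfl fun ℓ hℓ => (hG (mem_Ioc.mp hℓ).1.ne').symm
    _ = ∑ d ∈ Ioc 0 N, B d * ∑ n ∈ Ioc 0 (N / d), (ζ * G) n := by
        rw [← sum_Ioc_mul_eq_sum_sum, ← sum_Ioc_mul_eq_sum_sum, mul_assoc]
    _ = ∑ d ∈ Icc 1 N, b d * ∑ n ∈ Icc 1 (N / d), ∑ e ∈ n.divisors, g e := by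
        refine sum_congr (hIcc N).symm fun d hd => ?_
        rw [hB (mem_Ioc.mp hd).1.ne', hIcc]
        congr 1
        refine sum_congr rfl fun n _ => ?_
        rw [coe_zeta_mul_apply]
        exact sum_congr rfl fun e he => hG (Nat.pos_of_mem_divisors he).ne'

theorem sum_moebiusConvPsi_div_mul_eq (g : ℕ → ℂ) (x : ℝ) :
    ∑ d ∈ Icc 1 ⌊x⌋₊, ∑ ℓ ∈ Icc 1 ⌊x / d⌋₊, (moebiusConvPsi d : ℂ) / d * g ℓ
      = ∑ d ∈ Icc 1 ⌊x⌋₊, (absMoebiusConvMoebius d : ℂ) / d *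
          ∑ n ∈ Icc 1 ⌊x / d⌋₊, ∑ e ∈ n.divisors, g e := by
  simp_rw [Nat.floor_div_natCast, ← mul_sum]
  rw [← sum_Icc_sum_divisors_mul_sum_Icc_div]
  refine sum_congr rfl fun d hd => ?_
  rw [moebiusConvPsi_div_eq_sum (by simp at hd; omega)]

theorem sum_absMoebiusConvMoebius_div_pow_eq (N j : ℕ) :
    ∑ d ∈ Icc 1 N, (absMoebiusConvMoebius d : ℂ) / (d : ℂ) ^ j
      = ∑ k ∈ Icc 1 N.sqrt, (μ k : ℂ) / (k : ℂ) ^ (2 * j) := by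
  simp_rw [absMoebiusConvMoebius_eq_moebiusSqrt, div_eq_mul_inv, sum_Icc_moebiusSqrt_mul,
    Nat.cast_pow, ← pow_mul]

theorem sum_divisors_inv_pow_eq (m : ℕ) (y : ℝ) :
    ∑ n ∈ Icc 1 ⌊y⌋₊, ∑ e ∈ n.divisors, ((e : ℂ) ^ (2 * m))⁻¹
      = genDivisorError m y + riemannZeta (1 + 2 * m) * y - riemannZeta (2 * m) / 2 := by
  rw [genDivisorError]
  ring

theorem hyperbola_sum_sub_mainTerm_eq (m : ℕ) (x : ℝ) :
    (∑ d ∈ Icc 1 ⌊x⌋₊, ∑ ℓ ∈ Icc 1 ⌊x / d⌋₊,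
        ((moebiusConvPsi d : ℂ) / d) * ((ℓ : ℂ) ^ (2 * m))⁻¹)
      - ((riemannZeta (1 + 2 * m) / riemannZeta 4) * x
        + (∑ d ∈ Icc 1 ⌊x⌋₊, ((absMoebiusConvMoebius d : ℂ) / d) * genDivisorError m (x / d))
        - riemannZeta (2 * m) / (2 * riemannZeta 2))
      = riemannZeta (1 + 2 * m) * x *
          (∑ k ∈ Icc 1 (Nat.sqrt ⌊x⌋₊), (μ k : ℂ) / (k : ℂ) ^ 4 - (riemannZeta 4)⁻¹)
        - riemannZeta (2 * m) / 2 *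
          (∑ k ∈ Icc 1 (Nat.sqrt ⌊x⌋₊), (μ k : ℂ) / (k : ℂ) ^ 2 - (riemannZeta 2)⁻¹) := by
  have hexpand : ∀ d ∈ Icc 1 ⌊x⌋₊, (absMoebiusConvMoebius d : ℂ) / d *
      ∑ n ∈ Icc 1 ⌊x / d⌋₊, ∑ e ∈ n.divisors, ((e : ℂ) ^ (2 * m))⁻¹
      = (absMoebiusConvMoebius d : ℂ) / d * genDivisorError m (x / d)
        + riemannZeta (1 + 2 * m) * x * ((absMoebiusConvMoebius d : ℂ) / (d : ℂ) ^ 2)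
        - riemannZeta (2 * m) / 2 * ((absMoebiusConvMoebius d : ℂ) / (d : ℂ) ^ 1) := by
    -- the exponent `1` lets `sum_absMoebiusConvMoebius_div_pow_eq` rewrite both sums
    intro d hd
    have hd0 : (d : ℂ) ≠ 0 := Nat.cast_ne_zero.mpr (by simp at hd; omega)
    rw [sum_divisors_inv_pow_eq]
    push_cast
    field_simp
  rw [sum_moebiusConvPsi_div_mul_eq, sum_congr rfl hexpand, sum_sub_distrib, sum_add_distrib,
    ← mul_sum, ← mul_sum, sum_absMoebiusConvMoebius_div_pow_eq,
    sum_absMoebiusConvMoebius_div_pow_eq]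
  ring

theorem one_le_sqrt_floor_and_sqrt_le_two_mul {x : ℝ} (hx : 1 ≤ x) :
    1 ≤ Nat.sqrt ⌊x⌋₊ ∧ √x ≤ 2 * (Nat.sqrt ⌊x⌋₊ : ℝ) := by
  have hK : 1 ≤ Nat.sqrt ⌊x⌋₊ := Nat.le_sqrt.mpr (Nat.le_floor (by simpa using hx))
  refine ⟨hK, ?_⟩
  have hlt : x < ((Nat.sqrt ⌊x⌋₊ : ℝ) + 1) ^ 2 := by
    calc x < ⌊x⌋₊ + 1 := Nat.lt_floor_add_one x
      _ ≤ ((Nat.sqrt ⌊x⌋₊ + 1) ^ 2 : ℕ) := by exact_mod_cast Nat.lt_succ_sqrt' ⌊x⌋₊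
      _ = ((Nat.sqrt ⌊x⌋₊ : ℝ) + 1) ^ 2 := by push_cast; ring
  have hK' : (1 : ℝ) ≤ Nat.sqrt ⌊x⌋₊ := by exact_mod_cast hK
  calc √x ≤ (Nat.sqrt ⌊x⌋₊ : ℝ) + 1 := Real.sqrt_le_iff.mpr ⟨by positivity, hlt.le⟩
    _ ≤ 2 * (Nat.sqrt ⌊x⌋₊ : ℝ) := by linarith

theorem norm_mainTerm_error_le (A B : ℂ) {x : ℝ} (hx : 1 ≤ x) :
    ‖A * x * (∑ k ∈ Icc 1 (Nat.sqrt ⌊x⌋₊), (μ k : ℂ) / (k : ℂ) ^ 4 - (riemannZeta 4)⁻¹)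
        - B / 2 * (∑ k ∈ Icc 1 (Nat.sqrt ⌊x⌋₊), (μ k : ℂ) / (k : ℂ) ^ 2 - (riemannZeta 2)⁻¹)‖
      ≤ (8 * ‖A‖ + ‖B‖) * (√x)⁻¹ := by
  obtain ⟨hK1, hsqrt⟩ := one_le_sqrt_floor_and_sqrt_le_two_mul hx
  set K := Nat.sqrt ⌊x⌋₊
  have hK : (0 : ℝ) < K := by exact_mod_cast hK1
  have hK0 : K ≠ 0 := by omega
  have h4 := norm_sum_moebius_div_pow_sub_inv_riemannZeta_le (s := 4) (by norm_num) hK0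
  have h2 := norm_sum_moebius_div_pow_sub_inv_riemannZeta_le (s := 2) (by norm_num) hK0
  norm_num at h4 h2
  have hinvK : (K : ℝ)⁻¹ ≤ 2 * (√x)⁻¹ := by
    rw [← div_eq_mul_inv, le_div_iff₀ (by positivity), inv_mul_le_iff₀ hK]
    linarith
  have hxK : x * ((K : ℝ) ^ 3)⁻¹ ≤ 4 * (K : ℝ)⁻¹ := by
    have hx4 : x ≤ 4 * (K : ℝ) ^ 2 := by
      nlinarith [Real.sq_sqrt (by linarith : 0 ≤ x), Real.sqrt_nonneg x]
    calc x * ((K : ℝ) ^ 3)⁻¹ ≤ 4 * (K : ℝ) ^ 2 * ((K : ℝ) ^ 3)⁻¹ := by gcongr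
      _ = 4 * (K : ℝ)⁻¹ := by field_simp
  calc _ ≤ ‖A‖ * x * ((K : ℝ) ^ 3)⁻¹ + ‖B‖ / 2 * (K : ℝ)⁻¹ := by
        refine (norm_sub_le _ _).trans ?_
        rw [norm_mul, norm_mul, norm_mul, norm_div, Complex.norm_real, Real.norm_of_nonneg
          (by linarith), Complex.norm_two]
        gcongr
    _ ≤ (4 * ‖A‖ + ‖B‖ / 2) * (K : ℝ)⁻¹ := by
        rw [mul_assoc]
        nlinarith [norm_nonneg A]
    _ ≤ (8 * ‖A‖ + ‖B‖) * (√x)⁻¹ := by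
        nlinarith [norm_nonneg A, norm_nonneg B]

theorem one_lt_log_five : 1 < Real.log 5 := by
  rw [Real.lt_log_iff_exp_lt (by norm_num)]
  exact Real.exp_one_lt_d9.trans (by norm_num)

theorem exists_inv_sqrt_le_deltaFn : ∃ C > 0, ∀ x > 5, (√x)⁻¹ ≤ deltaFn C x := by
  set c := Real.log (Real.log 5) ^ (1 / 5 : ℝ)
  have hc : 0 < c := Real.rpow_pos_of_pos (Real.log_pos one_lt_log_five) _
  refine ⟨c / 2, by positivity, fun x hx => ?_⟩
  have hlog : Real.log 5 < Real.log x := Real.log_lt_log (by norm_num) hx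
  have hL : 1 < Real.log x := one_lt_log_five.trans hlog
  have hcQ : c ≤ Real.log (Real.log x) ^ (1 / 5 : ℝ) :=
    Real.rpow_le_rpow (Real.log_pos one_lt_log_five).le
      (Real.log_le_log (by linarith [one_lt_log_five]) hlog.le) (by norm_num)
  have hP : Real.log x ^ (3 / 5 : ℝ) ≤ Real.log x := by
    simpa using Real.rpow_le_rpow_of_exponent_le hL.le (by norm_num : (3 / 5 : ℝ) ≤ 1)
  have hexponent : c / 2 * Real.log x ^ (3 / 5 : ℝ) / Real.log (Real.log x) ^ (1 / 5 : ℝ)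
      ≤ Real.log x / 2 := by
    rw [div_le_iff₀ (hc.trans_le hcQ)]
    nlinarith [Real.rpow_nonneg (by linarith : (0 : ℝ) ≤ Real.log x) (3 / 5 : ℝ)]
  have hsqrt : (√x)⁻¹ = Real.exp (-(Real.log x / 2)) := by
    rw [Real.exp_neg, ← Real.log_sqrt (by linarith), Real.exp_log (by positivity)]
  rw [hsqrt, deltaFn, neg_mul, neg_div]
  exact Real.exp_le_exp.mpr (neg_le_neg hexponent)

theorem moebius_conv_psi_quotient_hyperbola_sum_general (m : ℕ) :
    ∃ C > 0, ∃ Cm > 0, ∀ x : ℝ, x > 5 →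
      ‖(∑ d ∈ Finset.Icc 1 ⌊x⌋₊, ∑ ℓ ∈ Finset.Icc 1 ⌊x / d⌋₊,
            ((moebiusConvPsi d : ℂ) / d) * ((ℓ : ℂ) ^ (2 * m))⁻¹)
        - ((riemannZeta (1 + 2 * m) / riemannZeta 4) * x
            + (∑ d ∈ Finset.Icc 1 ⌊x⌋₊,
                ((absMoebiusConvMoebius d : ℂ) / d) * genDivisorError m (x / d))
            - riemannZeta (2 * m) / (2 * riemannZeta 2))‖
      ≤ Cm * deltaFn C x := by
  obtain ⟨C, hC, hδ⟩ := exists_inv_sqrt_le_deltaFn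
  refine ⟨C, hC, 8 * ‖riemannZeta (1 + 2 * m)‖ + ‖riemannZeta (2 * m)‖ + 1, by positivity,
    fun x hx => ?_⟩
  rw [hyperbola_sum_sub_mainTerm_eq]
  calc _ ≤ (8 * ‖riemannZeta (1 + 2 * m)‖ + ‖riemannZeta (2 * m)‖) * (√x)⁻¹ :=
        norm_mainTerm_error_le _ _ (by linarith)
    _ ≤ _ := mul_le_mul (by linarith) (hδ x hx) (by positivity) (by positivity)

theorem moebius_conv_psi_quotient_hyperbola_sum (m : ℕ) (hm : 0 < m) :
    ∃ C > 0, ∃ Cm > 0, ∀ x : ℝ, x > 5 →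
      ‖(∑ d ∈ Finset.Icc 1 ⌊x⌋₊, ∑ ℓ ∈ Finset.Icc 1 ⌊x / d⌋₊,
            ((moebiusConvPsi d : ℂ) / d) * ((ℓ : ℂ) ^ (2 * m))⁻¹)
        - ((riemannZeta (1 + 2 * m) / riemannZeta 4) * x
            + (∑ d ∈ Finset.Icc 1 ⌊x⌋₊,
                ((absMoebiusConvMoebius d : ℂ) / d) * genDivisorError m (x / d))
            - riemannZeta (2 * m) / (2 * riemannZeta 2))‖
      ≤ Cm * deltaFn C x :=
  moebius_conv_psi_quotient_hyperbola_sum_general m
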